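/- arXiv:1512.02566 — 2 statements merged into one kernel-verified Lean document; each statement's English description precedes it below -/
import Mathlib

section
/- Let c : Fin d → ℂ with ∑_n |c_n|² = 1, let A be a d×d complex matrix, and let σ̄ = diag(|c_n|²). Then ∑_{i≠j} |c_i|²|c_j|²|A_{ji}|² ≤ tr(A σ̄ A† σ̄) ≤ ‖A‖²·∑_n |c_n|⁴. -/
/-!
Expanding the trace, `tr(A σ̄ A† σ̄) = ∑_{i,k} s_i s_k |A_{ik}|²` with `s_n = |c_n|²`. Dropping the
diagonal terms gives the lower bound. For the upper bound, `s_i s_k ≤ (s_i² + s_k²)/2` splits the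
sum into a row part `∑_i s_i² ∑_k |A_{ik}|²` and a column part; every row and every column of `A`
has squared `ℓ²` norm at most `‖A‖²`, since it is `‖A† e_i‖²` resp. `‖A e_k‖²`.
-/

open Matrix Finset

open scoped Matrix.Norms.L2Operator

namespace Matrix

variable {𝕜 m n : Type*} [RCLike 𝕜] [Fintype m] [Fintype n] [DecidableEq n]

lemma sum_norm_sq_col_le_l2_opNorm_sq (A : Matrix m n 𝕜) (j : n) :
    ∑ i, ‖A i j‖ ^ 2 ≤ ‖A‖ ^ 2 := by
  have h := A.l2_opNorm_mulVec (EuclideanSpace.single j 1)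
  rw [PiLp.norm_single, norm_one, mul_one] at h
  calc ∑ i, ‖A i j‖ ^ 2
      = ‖(EuclideanSpace.equiv m 𝕜).symm (A *ᵥ EuclideanSpace.single j 1)‖ ^ 2 := by
        rw [EuclideanSpace.norm_sq_eq]
        simp [mulVec_single]
    _ ≤ ‖A‖ ^ 2 := by gcongr

lemma sum_norm_sq_row_le_l2_opNorm_sq [DecidableEq m] (A : Matrix m n 𝕜) (i : m) :
    ∑ j, ‖A i j‖ ^ 2 ≤ ‖A‖ ^ 2 := by
  simpa [l2_opNorm_conjTranspose] using Aᴴ.sum_norm_sq_col_le_l2_opNorm_sq i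

lemma sum_sum_mul_mul_norm_sq_le_l2_opNorm_sq_mul (A : Matrix n n 𝕜) (s : n → ℝ) :
    ∑ i, ∑ k, s i * s k * ‖A i k‖ ^ 2 ≤ ‖A‖ ^ 2 * ∑ i, s i ^ 2 := by
  have amgm (i k : n) : s i * s k * ‖A i k‖ ^ 2
      ≤ (s i ^ 2 * ‖A i k‖ ^ 2 + s k ^ 2 * ‖A i k‖ ^ 2) / 2 := by
    nlinarith [sq_nonneg ((s i - s k) * ‖A i k‖)]
  have rows : ∑ i, ∑ k, s i ^ 2 * ‖A i k‖ ^ 2 ≤ ‖A‖ ^ 2 * ∑ i, s i ^ 2 := by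
    rw [mul_sum]
    gcongr with i
    rw [← mul_sum, mul_comm]
    gcongr
    exact A.sum_norm_sq_row_le_l2_opNorm_sq i
  have cols : ∑ i, ∑ k, s k ^ 2 * ‖A i k‖ ^ 2 ≤ ‖A‖ ^ 2 * ∑ i, s i ^ 2 := by
    rw [sum_comm, mul_sum]
    gcongr with k
    rw [← mul_sum, mul_comm]
    gcongr
    exact A.sum_norm_sq_col_le_l2_opNorm_sq k
  calc ∑ i, ∑ k, s i * s k * ‖A i k‖ ^ 2
      ≤ ∑ i, ∑ k, (s i ^ 2 * ‖A i k‖ ^ 2 + s k ^ 2 * ‖A i k‖ ^ 2) / 2 := by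
        gcongr
        exact amgm _ _
    _ = ((∑ i, ∑ k, s i ^ 2 * ‖A i k‖ ^ 2) + ∑ i, ∑ k, s k ^ 2 * ‖A i k‖ ^ 2) / 2 := by
        simp only [← sum_div, sum_add_distrib]
    _ ≤ ‖A‖ ^ 2 * ∑ i, s i ^ 2 := by linarith

lemma trace_mul_diagonal_mul_conjTranspose_mul_diagonal (A : Matrix n n 𝕜) (s : n → ℝ) :
    (A * diagonal (fun i => (s i : 𝕜)) * Aᴴ * diagonal (fun i => (s i : 𝕜))).trace
      = ((∑ i, ∑ k, s i * s k * ‖A i k‖ ^ 2 : ℝ) : 𝕜) := by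
  simp only [trace, diag_apply, mul_apply, conjTranspose_apply, diagonal_apply, mul_ite,
    mul_zero, sum_ite_eq', mem_univ, if_true, sum_mul]
  push_cast
  refine sum_congr rfl fun i _ => sum_congr rfl fun k _ => ?_
  rw [RCLike.star_def, ← RCLike.mul_conj]
  ring

end Matrix

theorem offdiag_sum_le_trace_le_general (d : ℕ) (c : Fin d → ℂ)
    (A : Matrix (Fin d) (Fin d) ℂ) :
    (∑ i : Fin d, ∑ j : Fin d, if i ≠ j then ‖c i‖ ^ 2 * ‖c j‖ ^ 2 * ‖A j i‖ ^ 2 else 0)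
        ≤ ((A * Matrix.diagonal (fun n => ((‖c n‖ ^ 2 : ℝ) : ℂ)) * Aᴴ
            * Matrix.diagonal (fun n => ((‖c n‖ ^ 2 : ℝ) : ℂ))).trace).re
    ∧ ((A * Matrix.diagonal (fun n => ((‖c n‖ ^ 2 : ℝ) : ℂ)) * Aᴴ
            * Matrix.diagonal (fun n => ((‖c n‖ ^ 2 : ℝ) : ℂ))).trace).re
        ≤ ‖Matrix.toEuclideanCLM (𝕜 := ℂ) A‖ ^ 2 * ∑ n : Fin d, ‖c n‖ ^ 4 := by
  set σ := diagonal (fun n => ((‖c n‖ ^ 2 : ℝ) : ℂ))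
  have trace_eq :
      (A * σ * Aᴴ * σ).trace.re = ∑ i, ∑ k, ‖c i‖ ^ 2 * ‖c k‖ ^ 2 * ‖A i k‖ ^ 2 :=
    (congrArg Complex.re (A.trace_mul_diagonal_mul_conjTranspose_mul_diagonal _)).trans
      (Complex.ofReal_re _)
  rw [trace_eq, l2_opNorm_toEuclideanCLM]
  refine ⟨?_, ?_⟩
  · rw [sum_comm]
    gcongr with i _ k _
    split_ifs
    · rw [mul_comm (‖c k‖ ^ 2)]
    · positivity
  · refine (A.sum_sum_mul_mul_norm_sq_le_l2_opNorm_sq_mul (fun n => ‖c n‖ ^ 2)).trans_eq ?_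
    simp only [← pow_mul]

/-- With `σ̄ = diag(|c_n|²)` and `∑ |c_n|² = 1`:
`∑_{i≠j} |c_i|²|c_j|²|A_{ji}|² ≤ tr(A σ̄ A† σ̄) ≤ ‖A‖² ∑_n |c_n|⁴`. -/
theorem offdiag_sum_le_trace_le (d : ℕ) (c : Fin d → ℂ)
    (hc : ∑ n : Fin d, ‖c n‖ ^ 2 = 1) (A : Matrix (Fin d) (Fin d) ℂ) :
    (∑ i : Fin d, ∑ j : Fin d, if i ≠ j then ‖c i‖ ^ 2 * ‖c j‖ ^ 2 * ‖A j i‖ ^ 2 else 0)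
        ≤ ((A * Matrix.diagonal (fun n => ((‖c n‖ ^ 2 : ℝ) : ℂ)) * Aᴴ
            * Matrix.diagonal (fun n => ((‖c n‖ ^ 2 : ℝ) : ℂ))).trace).re
    ∧ ((A * Matrix.diagonal (fun n => ((‖c n‖ ^ 2 : ℝ) : ℂ)) * Aᴴ
            * Matrix.diagonal (fun n => ((‖c n‖ ^ 2 : ℝ) : ℂ))).trace).re
        ≤ ‖Matrix.toEuclideanCLM (𝕜 := ℂ) A‖ ^ 2 * ∑ n : Fin d, ‖c n‖ ^ 4 :=
  offdiag_sum_le_trace_le_general d c A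
end

section
/- For the error function erf(x) = (2/√π)∫₀ˣ e^{−t²}dt and any x ≥ 0, erf(x) ≤ √(1 − exp(−4x²/π)). -/
/-!
Write `F x = ∫₀ˣ e^{-t²} dt`. Both `F x ^ 2` and
`G x = ∫₀¹ (1 - e^{-x²(1+s²)}) / (1+s²) ds` vanish at `0` and have derivative
`2 e^{-x²} F x` (for `G`, differentiate under the integral and substitute `t = x s`), so
`F x ^ 2 = G x`. The map `u ↦ 1 - e^{-x² u}` is concave, so it lies below its tangent at
`u = 4/π`; integrating that tangent against `ds / (1+s²)` over `[0, 1]` gives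
`G x ≤ π/4 · (1 - e^{-4x²/π})`, i.e. `erf x ^ 2 ≤ 1 - e^{-4x²/π}`.
-/

open Real intervalIntegral

noncomputable def erf (x : ℝ) : ℝ :=
  (2 / Real.sqrt π) * ∫ t in (0 : ℝ)..x, Real.exp (-t ^ 2)

theorem integral_zero_eq_smul_integral_comp_mul {E : Type*} [NormedAddCommGroup E]
    [NormedSpace ℝ E] (f : ℝ → E) (x : ℝ) :
    ∫ t in (0 : ℝ)..x, f t = x • ∫ s in (0 : ℝ)..1, f (x * s) := by
  rw [smul_integral_comp_mul_left, mul_zero, mul_one]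

theorem hasDerivAt_intervalIntegral_of_continuous {E : Type*} [NormedAddCommGroup E]
    [NormedSpace ℝ E] {F F' : ℝ → ℝ → E} {a b : ℝ} (x₀ : ℝ) (hF : ∀ x, Continuous (F x))
    (hF' : Continuous F'.uncurry) (hderiv : ∀ x s, HasDerivAt (F · s) (F' x s) x) :
    HasDerivAt (fun x ↦ ∫ s in a..b, F x s) (∫ s in a..b, F' x₀ s) x₀ := by
  obtain ⟨C, hC⟩ := ((isCompact_closedBall x₀ 1).prod
    (isCompact_uIcc (a := a) (b := b))).exists_bound_of_continuousOn hF'.continuousOn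
  refine (hasDerivAt_integral_of_dominated_loc_of_deriv_le (bound := fun _ ↦ C)
    (Metric.closedBall_mem_nhds x₀ one_pos) (.of_forall fun x ↦ (hF x).aestronglyMeasurable)
    ((hF x₀).intervalIntegrable a b) (hF'.uncurry_left x₀).aestronglyMeasurable ?_
    intervalIntegrable_const ?_).2
  · exact .of_forall fun s hs x hx ↦ hC (x, s) ⟨hx, Set.uIoc_subset_uIcc hs⟩
  · exact .of_forall fun s _ x _ ↦ hderiv x s

theorem hasDerivAt_integral_one_sub_exp_div (x : ℝ) :
    HasDerivAt (fun y ↦ ∫ s in (0 : ℝ)..1, (1 - exp (-(y ^ 2 * (1 + s ^ 2)))) / (1 + s ^ 2))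
      (2 * exp (-x ^ 2) * ∫ t in (0 : ℝ)..x, exp (-t ^ 2)) x := by
  have hderiv : ∀ y s : ℝ, HasDerivAt (fun y ↦ (1 - exp (-(y ^ 2 * (1 + s ^ 2)))) / (1 + s ^ 2))
      (2 * y * exp (-(y ^ 2 * (1 + s ^ 2)))) y := fun y s ↦ by
    refine ((((hasDerivAt_pow 2 y).mul_const (1 + s ^ 2)).fun_neg.exp.const_sub 1).div_const
      (1 + s ^ 2)).congr_deriv ?_
    field_simp
    ring
  refine (hasDerivAt_intervalIntegral_of_continuous x
    (fun y ↦ by fun_prop (disch := intro; positivity)) (by fun_prop) hderiv).congr_deriv ?_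
  rw [integral_zero_eq_smul_integral_comp_mul (fun t ↦ exp (-t ^ 2)), smul_eq_mul, ← mul_assoc,
    ← integral_const_mul]
  refine integral_congr fun s _ ↦ ?_
  rw [show -(x ^ 2 * (1 + s ^ 2)) = -x ^ 2 + -(x * s) ^ 2 by ring, exp_add]
  ring

theorem sq_integral_exp_neg_sq (x : ℝ) :
    (∫ t in (0 : ℝ)..x, exp (-t ^ 2)) ^ 2 =
      ∫ s in (0 : ℝ)..1, (1 - exp (-(x ^ 2 * (1 + s ^ 2)))) / (1 + s ^ 2) := by
  have hdiff : ∀ y, HasDerivAt (fun y ↦ (∫ t in (0 : ℝ)..y, exp (-t ^ 2)) ^ 2 -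
      ∫ s in (0 : ℝ)..1, (1 - exp (-(y ^ 2 * (1 + s ^ 2)))) / (1 + s ^ 2)) 0 y := fun y ↦ by
    have hprim := ((by fun_prop : Continuous fun t : ℝ ↦ exp (-t ^ 2)).integral_hasStrictDerivAt
      0 y).hasDerivAt
    refine ((hprim.fun_pow 2).fun_sub (hasDerivAt_integral_one_sub_exp_div y)).congr_deriv ?_
    ring
  have hconst := is_const_of_deriv_eq_zero (fun y ↦ (hdiff y).differentiableAt)
    (fun y ↦ (hdiff y).deriv) x 0
  simpa [sub_eq_zero] using hconst

theorem one_sub_exp_neg_mul_le_tangent (a u c : ℝ) :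
    1 - exp (-(a * u)) ≤ 1 - exp (-(a * c)) + a * exp (-(a * c)) * (u - c) := by
  have h := mul_le_mul_of_nonneg_left (add_one_le_exp (a * c - a * u)) (exp_pos (-(a * c))).le
  rw [← exp_add, show -(a * c) + (a * c - a * u) = -(a * u) by ring] at h
  linear_combination h

/-- `4/π` is the mean of `1 + s²` for the probability density `4 / (π (1 + s²))` on `[0, 1]`,
so the tangent bound at `u = 4/π` integrates to Jensen's inequality. -/
theorem integral_one_sub_exp_div_le (a : ℝ) :
    ∫ s in (0 : ℝ)..1, (1 - exp (-(a * (1 + s ^ 2)))) / (1 + s ^ 2) ≤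
      π / 4 * (1 - exp (-4 * a / π)) := by
  set c := 4 / π
  set A := 1 - exp (-(a * c))
  set B := a * exp (-(a * c))
  have hpoint : ∀ s : ℝ, (1 - exp (-(a * (1 + s ^ 2)))) / (1 + s ^ 2) ≤
      (A - B * c) * (1 + s ^ 2)⁻¹ + B := fun s ↦ by
    have hu : (0 : ℝ) < 1 + s ^ 2 := by positivity
    have := one_sub_exp_neg_mul_le_tangent a (1 + s ^ 2) c
    rw [div_le_iff₀ hu]
    field_simp
    linarith
  have hinv : Continuous fun s : ℝ ↦ (1 + s ^ 2)⁻¹ := by fun_prop (disch := intro; positivity)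
  calc _ ≤ ∫ s in (0 : ℝ)..1, ((A - B * c) * (1 + s ^ 2)⁻¹ + B) :=
        integral_mono zero_le_one
          (Continuous.intervalIntegrable (by fun_prop (disch := intro; positivity)) 0 1)
          (Continuous.intervalIntegrable (by fun_prop) 0 1) hpoint
    _ = (A - B * c) * (π / 4) + B := by
        rw [integral_add ((hinv.intervalIntegrable 0 1).const_mul _) intervalIntegrable_const,
          integral_const_mul, integral_inv_one_add_sq, integral_const]
        simp
    _ = π / 4 * (1 - exp (-4 * a / π)) := by
        have hc : c * (π / 4) = 1 := by simp only [c]; field_simp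
        rw [show -4 * a / π = -(a * c) by simp only [c]; ring]
        linear_combination (-B) * hc

theorem erf_le_winitzki_general (x : ℝ) :
    erf x ≤ Real.sqrt (1 - Real.exp (-4 * x ^ 2 / π)) := by
  refine (le_abs_self _).trans (abs_le_sqrt ?_)
  calc erf x ^ 2 = 4 / π * (∫ t in (0 : ℝ)..x, exp (-t ^ 2)) ^ 2 := by
        rw [erf, mul_pow, div_pow, sq_sqrt pi_pos.le]
        norm_num
    _ ≤ 4 / π * (π / 4 * (1 - exp (-4 * x ^ 2 / π))) := by
        rw [sq_integral_exp_neg_sq]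
        gcongr
        exact integral_one_sub_exp_div_le (x ^ 2)
    _ = 1 - exp (-4 * x ^ 2 / π) := by field_simp

/-- One-sided Winitzki bound: for `x ≥ 0`, `erf(x) ≤ √(1 − exp(−4x²/π))`. -/
theorem erf_le_winitzki (x : ℝ) (hx : 0 ≤ x) :
    erf x ≤ Real.sqrt (1 - Real.exp (-4 * x ^ 2 / π)) :=
  erf_le_winitzki_general x
end
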